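/- arXiv:1301.5609 — 5 statements merged into one kernel-verified Lean document; each statement's English description precedes it below -/
import Mathlib

section
/- Fix ε > 0, κ ∈ ℝ and r₀ ∈ ℝ, and define q : ℝ → ℝ by q(r) := tanh((r − r₀)/ε). Then q, together with the wave speed c = κ, solves the traveling-wave equation: for every r ∈ ℝ, ε(−q''(r) − κ q'(r)) + (1/ε)(q(r)² − 1)(2 q(r) − εκ) = 0. -/
/-! Since `tanh' = 1 - tanh²`, the profile satisfies `q' = (1 - q²)/ε` and `q'' = -2q(1 - q²)/ε²`;
substituting these turns the equation into a polynomial identity in `q`, in which the two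
`κ`-terms cancel. -/

open Real

theorem Real.hasDerivAt_tanh (x : ℝ) : HasDerivAt tanh (1 - tanh x ^ 2) x := by
  have hcosh : cosh x ≠ 0 := (cosh_pos x).ne'
  rw [show tanh = fun y => sinh y / cosh y from funext tanh_eq_sinh_div_cosh]
  refine ((hasDerivAt_sinh x).div (hasDerivAt_cosh x) hcosh).congr_deriv ?_
  field_simp

theorem hasDerivAt_tanh_sub_div (a ε s : ℝ) :
    HasDerivAt (fun s => tanh ((s - a) / ε)) ((1 - tanh ((s - a) / ε) ^ 2) / ε) s := by
  refine ((hasDerivAt_tanh ((s - a) / ε)).comp s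
    (((hasDerivAt_id s).sub_const a).div_const ε)).congr_deriv ?_
  simp only [mul_one_div]

theorem deriv_tanh_sub_div (a ε : ℝ) :
    deriv (fun s => tanh ((s - a) / ε)) = fun s => (1 - tanh ((s - a) / ε) ^ 2) / ε :=
  funext fun s => (hasDerivAt_tanh_sub_div a ε s).deriv

theorem deriv_deriv_tanh_sub_div (a ε s : ℝ) :
    deriv (deriv (fun s => tanh ((s - a) / ε))) s
      = -2 * tanh ((s - a) / ε) * (1 - tanh ((s - a) / ε) ^ 2) / ε ^ 2 := by
  rw [deriv_tanh_sub_div]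
  refine ((((hasDerivAt_tanh_sub_div a ε s).pow 2).const_sub 1).div_const ε).deriv.trans ?_
  ring

theorem travelling_wave_profile_general (ε κ r₀ : ℝ) :
    ∀ r : ℝ,
      ε * (-(deriv (deriv (fun s : ℝ => Real.tanh ((s - r₀) / ε))) r)
            - κ * deriv (fun s : ℝ => Real.tanh ((s - r₀) / ε)) r)
        + (1 / ε) * ((Real.tanh ((r - r₀) / ε)) ^ 2 - 1)
            * (2 * Real.tanh ((r - r₀) / ε) - ε * κ) = 0 := by
  intro r
  rw [deriv_deriv_tanh_sub_div, deriv_tanh_sub_div]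
  rcases eq_or_ne ε 0 with rfl | hε
  · -- every term vanishes, through `0⁻¹ = 0`
    simp
  · field_simp
    ring

/-- the profile `q(r) = tanh((r − r₀)/ε)`, with wave speed `c = κ`,
solves the traveling wave equation `ε(−q″ − κ q′) + (1/ε)(q² − 1)(2q − εκ) = 0`. -/
theorem travelling_wave_profile (ε κ r₀ : ℝ) (hε : 0 < ε) :
    ∀ r : ℝ,
      ε * (-(deriv (deriv (fun s : ℝ => Real.tanh ((s - r₀) / ε))) r)
            - κ * deriv (fun s : ℝ => Real.tanh ((s - r₀) / ε)) r)
        + (1 / ε) * ((Real.tanh ((r - r₀) / ε)) ^ 2 - 1)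
            * (2 * Real.tanh ((r - r₀) / ε) - ε * κ) = 0 :=
  travelling_wave_profile_general ε κ r₀
end

section
/- Let ε > 0 and let v : (0,∞) → ℝ be continuously differentiable, with v(r) = −1 for all sufficiently small r > 0 and v(r) = 1 for all sufficiently large r. Then ∫₀^∞ [ (ε/2) v'(r)² + (1/(2ε)) (v(r)² − 1)² ] dr ≥ 4/3. -/
open MeasureTheory Set

/-!
By AM-GM the energy density dominates `|v'| |1 - v²|`, which is the absolute value of the
derivative of `W ∘ v` for `W s = s - s³/3`. Integrating over an interval `[a, b]` with
`v a = -1` and `v b = 1` therefore bounds the energy below by `W 1 - W (-1) = 4/3`.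
-/

theorem abs_mul_le_half_mul_sq_add_inv_mul_sq {ε : ℝ} (hε : 0 < ε) (x y : ℝ) :
    |x * y| ≤ ε / 2 * x ^ 2 + 1 / (2 * ε) * y ^ 2 := by
  have hsq : 0 ≤ (ε * |x| - |y|) ^ 2 := sq_nonneg _
  have hdiv : ε / 2 * x ^ 2 + 1 / (2 * ε) * y ^ 2 = (ε ^ 2 * |x| ^ 2 + |y| ^ 2) / (2 * ε) := by
    rw [sq_abs, sq_abs]
    field_simp
  rw [hdiv, le_div_iff₀ (by positivity), abs_mul]
  nlinarith

theorem HasDerivAt.sub_pow_three_div_three {v : ℝ → ℝ} {v' r : ℝ} (hv : HasDerivAt v v' r) :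
    HasDerivAt (fun x => v x - v x ^ 3 / 3) ((1 - v r ^ 2) * v') r := by
  have hcube : HasDerivAt (fun x => v x ^ 3 / 3) ((3 : ℕ) * v r ^ 2 * v' / 3) r :=
    (hv.pow 3).div_const 3
  exact (hv.sub hcube).congr_deriv (by push_cast; ring)

theorem ofReal_sub_le_setLIntegral_abs_deriv {f f' : ℝ → ℝ} {a b : ℝ} (hab : a ≤ b)
    (hf : ∀ x ∈ Icc a b, HasDerivAt f (f' x) x) (hf' : IntegrableOn f' (Icc a b)) :
    ENNReal.ofReal (f b - f a) ≤ ∫⁻ x in Icc a b, ENNReal.ofReal |f' x| := by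
  have hf'_Ioc : IntegrableOn f' (Ioc a b) := hf'.mono_set Ioc_subset_Icc_self
  have hftc : ∫ x in a..b, f' x = f b - f a :=
    intervalIntegral.integral_eq_sub_of_hasDerivAt (by rwa [uIcc_of_le hab])
      ((intervalIntegrable_iff_integrableOn_Icc_of_le hab).mpr hf')
  calc ENNReal.ofReal (f b - f a)
      ≤ ENNReal.ofReal (∫ x in Ioc a b, |f' x|) := by
        rw [← hftc, intervalIntegral.integral_of_le hab]
        exact ENNReal.ofReal_le_ofReal ((le_abs_self _).trans abs_integral_le_integral_abs)
    _ = ∫⁻ x in Ioc a b, ENNReal.ofReal |f' x| :=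
        ofReal_integral_eq_lintegral_ofReal hf'_Ioc.abs (ae_of_all _ fun _ => abs_nonneg _)
    _ ≤ ∫⁻ x in Icc a b, ENNReal.ofReal |f' x| := lintegral_mono_set Ioc_subset_Icc_self

/-- Modica–Mortola type lower bound (2.12): any C¹ transition on (0,∞)
from −1 (near 0) to 1 (for large r) has energy at least 4/3. -/
theorem energy_lower_bound (ε : ℝ) (hε : 0 < ε) (v : ℝ → ℝ)
    (hv : ContDiffOn ℝ 1 v (Set.Ioi 0))
    (h0 : ∃ δ > (0 : ℝ), ∀ r : ℝ, 0 < r → r < δ → v r = -1)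
    (h1 : ∃ M : ℝ, ∀ r : ℝ, M ≤ r → v r = 1) :
    ENNReal.ofReal (4 / 3) ≤
      ∫⁻ r in Set.Ioi (0 : ℝ),
        ENNReal.ofReal
          (ε / 2 * (deriv v r) ^ 2 + 1 / (2 * ε) * ((v r) ^ 2 - 1) ^ 2) := by
  obtain ⟨δ, hδ, hv_left⟩ := h0
  obtain ⟨M, hv_right⟩ := h1
  set a := δ / 2 with ha
  set b := max M (a + 1)
  have ha_pos : 0 < a := by positivity
  have hab : a ≤ b := le_max_of_le_right (by linarith)
  have hIcc : Icc a b ⊆ Ioi 0 := fun r hr => lt_of_lt_of_le ha_pos hr.1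
  have hderiv : ∀ r ∈ Icc a b,
      HasDerivAt (fun x => v x - v x ^ 3 / 3) ((1 - v r ^ 2) * deriv v r) r := fun r hr =>
    ((hv.differentiableOn one_ne_zero).differentiableAt (Ioi_mem_nhds (hIcc hr))).hasDerivAt
      |>.sub_pow_three_div_three
  have hcont : ContinuousOn (fun r => (1 - v r ^ 2) * deriv v r) (Icc a b) :=
    ((continuousOn_const.sub (hv.continuousOn.pow 2)).mul
      (hv.continuousOn_deriv_of_isOpen isOpen_Ioi le_rfl)).mono hIcc
  calc ENNReal.ofReal (4 / 3)
      = ENNReal.ofReal ((v b - v b ^ 3 / 3) - (v a - v a ^ 3 / 3)) := by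
        rw [hv_left a ha_pos (by linarith), hv_right b (le_max_left _ _)]
        norm_num
    _ ≤ ∫⁻ r in Icc a b, ENNReal.ofReal |(1 - v r ^ 2) * deriv v r| :=
        ofReal_sub_le_setLIntegral_abs_deriv hab hderiv hcont.integrableOn_Icc
    _ ≤ ∫⁻ r in Icc a b, ENNReal.ofReal
          (ε / 2 * (deriv v r) ^ 2 + 1 / (2 * ε) * ((v r) ^ 2 - 1) ^ 2) := by
        refine lintegral_mono fun r => ENNReal.ofReal_le_ofReal ?_
        rw [mul_comm, ← neg_sub, mul_neg, abs_neg]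
        exact abs_mul_le_half_mul_sq_add_inv_mul_sq hε _ _
    _ ≤ _ := lintegral_mono_set hIcc
end

section
/- Let ε > 0, κ > 0, and let v : ℝ × (0,∞) → ℝ be a smooth solution of ε(v_θθ/r² − v_rr − v_r/r) + (1/ε)(v² − 1)(2v − εκ) = 0. Define e_ε(v) := (ε/2)(v_θ²/r² + v_r²) + (1/(2ε))(v² − 1)². Then the pointwise identity ∂_θ e_ε(v) = ε ∂_r(v_θ v_r) + ε (v_θ/r) v_r (1 − κ r) + κ ε v_θ (v_r − (1/ε)(1 − v²)) holds on ℝ × (0,∞). -/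
/-- the differential energy identity (2.11) for smooth solutions of (2.4)
in Minkowskian polar coordinates: ∂_θ e_ε(v) = ε ∂_r(v_θ v_r) + Term 1 + Term 2. -/
theorem differential_energy_identity (ε κ : ℝ) (hε : 0 < ε) (hκ : 0 < κ)
    (v : ℝ → ℝ → ℝ)
    (hv : ContDiffOn ℝ (⊤ : ℕ∞) (fun p : ℝ × ℝ => v p.1 p.2) {p : ℝ × ℝ | 0 < p.2})
    (hpde : ∀ θ r : ℝ, 0 < r →
      ε * (deriv (deriv (fun θ' => v θ' r)) θ / r ^ 2
            - deriv (deriv (v θ)) r - deriv (v θ) r / r)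
        + 1 / ε * ((v θ r) ^ 2 - 1) * (2 * v θ r - ε * κ) = 0) :
    ∀ θ r : ℝ, 0 < r →
      deriv (fun θ' =>
          ε / 2 * ((deriv (fun θ'' => v θ'' r) θ') ^ 2 / r ^ 2
              + (deriv (v θ') r) ^ 2)
            + 1 / (2 * ε) * ((v θ' r) ^ 2 - 1) ^ 2) θ
        = ε * deriv (fun r' => deriv (fun θ' => v θ' r') θ * deriv (v θ) r') r
          + ε * (deriv (fun θ' => v θ' r) θ / r) * deriv (v θ) r * (1 - κ * r)
          + κ * ε * deriv (fun θ' => v θ' r) θ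
              * (deriv (v θ) r - 1 / ε * (1 - (v θ r) ^ 2)) := by
  intro θ r hr
  set U : Set (ℝ × ℝ) := {p : ℝ × ℝ | 0 < p.2} with hUdef
  have hUopen : IsOpen U := isOpen_lt continuous_const continuous_snd
  set F : ℝ × ℝ → ℝ := fun p => v p.1 p.2 with hFdef
  have hmem : ((θ, r) : ℝ × ℝ) ∈ U := hr
  have hFat : ∀ p ∈ U, ContDiffAt ℝ (⊤ : ℕ∞) F p := fun p hp =>
    hv.contDiffAt (hUopen.mem_nhds hp)
  have hFdiff : ∀ p ∈ U, HasFDerivAt F (fderiv ℝ F p) p := fun p hp =>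
    ((hFat p hp).differentiableAt (by simp)).hasFDerivAt
  -- lines
  have hlineθ : ∀ (r' : ℝ) (θ' : ℝ), HasDerivAt (fun t : ℝ => ((t, r') : ℝ × ℝ))
      ((1, 0) : ℝ × ℝ) θ' := fun r' θ' => (hasDerivAt_id θ').prodMk (hasDerivAt_const θ' r')
  have hliner : ∀ (θ' : ℝ) (r' : ℝ), HasDerivAt (fun t : ℝ => ((θ', t) : ℝ × ℝ))
      ((0, 1) : ℝ × ℝ) r' := fun θ' r' => (hasDerivAt_const r' θ').prodMk (hasDerivAt_id r')
  -- first partial derivatives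
  have hvθ : ∀ p ∈ U, HasDerivAt (fun t => v t p.2) (fderiv ℝ F p ((1, 0) : ℝ × ℝ)) p.1 := by
    intro p hp
    exact (hFdiff p hp).comp_hasDerivAt p.1 (hlineθ p.2 p.1)
  have hvr : ∀ p ∈ U, HasDerivAt (fun t => v p.1 t) (fderiv ℝ F p ((0, 1) : ℝ × ℝ)) p.2 := by
    intro p hp
    exact (hFdiff p hp).comp_hasDerivAt p.2 (hliner p.1 p.2)
  -- second derivative
  set D2 := fderiv ℝ (fderiv ℝ F) (θ, r) with hD2def
  have hD2 : HasFDerivAt (fderiv ℝ F) D2 (θ, r) := by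
    have h1 : ContDiffAt ℝ (⊤ : ℕ∞) (fderiv ℝ F) (θ, r) :=
      (hFat _ hmem).fderiv_right ((by simp))
    exact (h1.differentiableAt (by simp)).hasFDerivAt
  have hsymm : ∀ w z : ℝ × ℝ, D2 w z = D2 z w := by
    intro w z
    refine second_derivative_symmetric_of_eventually (f := F) ?_ hD2 w z
    filter_upwards [hUopen.mem_nhds hmem] with p hp using hFdiff p hp
  -- evaluated second partials along lines
  have hEval : ∀ (w : ℝ × ℝ) (c : ℝ → ℝ × ℝ) (c' : ℝ × ℝ) (t : ℝ), HasDerivAt c c' t →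
      c t = (θ, r) → HasDerivAt (fun s => fderiv ℝ F (c s) w) (D2 c' w) t := by
    intro w c c' t hc hct
    have h1 : HasDerivAt (fun s => fderiv ℝ F (c s)) (D2 c') t := by
      have h2 : HasFDerivAt (fderiv ℝ F) D2 (c t) := hct ▸ hD2
      exact h2.comp_hasDerivAt t hc
    have h3 := (ContinuousLinearMap.apply ℝ ℝ w).hasFDerivAt.comp_hasDerivAt t h1
    exact h3
  -- abbreviations
  set a := v θ r with ha
  set b := fderiv ℝ F (θ, r) ((1, 0) : ℝ × ℝ) with hb
  set c := fderiv ℝ F (θ, r) ((0, 1) : ℝ × ℝ) with hc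
  set A := D2 ((1, 0) : ℝ × ℝ) ((1, 0) : ℝ × ℝ) with hA
  set B := D2 ((1, 0) : ℝ × ℝ) ((0, 1) : ℝ × ℝ) with hB
  set C := D2 ((0, 1) : ℝ × ℝ) ((0, 1) : ℝ × ℝ) with hC
  have hbd : deriv (fun t => v t r) θ = b := (hvθ (θ, r) hmem).deriv
  have hcd : deriv (v θ) r = c := (hvr (θ, r) hmem).deriv
  have hrpos : ∀ᶠ r' in nhds r, 0 < r' := eventually_gt_nhds hr
  -- v_θθ
  have hθfun : (fun θ' => deriv (fun t => v t r) θ')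
      = fun θ' => fderiv ℝ F (θ', r) ((1, 0) : ℝ × ℝ) := by
    funext θ'
    exact (hvθ (θ', r) hr).deriv
  have hvθθ : deriv (deriv (fun θ' => v θ' r)) θ = A := by
    have h := hEval (1, 0) (fun t => (t, r)) (1, 0) θ (hlineθ r θ) rfl
    calc deriv (deriv (fun θ' => v θ' r)) θ
        = deriv (fun θ' => fderiv ℝ F (θ', r) ((1, 0) : ℝ × ℝ)) θ := by rw [← hθfun]
      _ = A := h.deriv
  -- v_rr
  have hvrr : deriv (deriv (v θ)) r = C := by
    have h := hEval (0, 1) (fun t => (θ, t)) (0, 1) r (hliner θ r) rfl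
    have heq : (fun r' => deriv (v θ) r')
        =ᶠ[nhds r] fun r' => fderiv ℝ F (θ, r') ((0, 1) : ℝ × ℝ) := by
      filter_upwards [hrpos] with r' hr' using (hvr (θ, r') hr').deriv
    calc deriv (deriv (v θ)) r
        = deriv (fun r' => fderiv ℝ F (θ, r') ((0, 1) : ℝ × ℝ)) r := heq.deriv_eq
      _ = C := h.deriv
  -- mixed-partial product term
  have hmix : deriv (fun r' => deriv (fun θ' => v θ' r') θ * deriv (v θ) r') r
      = B * c + b * C := by
    have h1 := hEval (1, 0) (fun t => (θ, t)) (0, 1) r (hliner θ r) rfl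
    have h2 := hEval (0, 1) (fun t => (θ, t)) (0, 1) r (hliner θ r) rfl
    have hprod := h1.fun_mul h2
    have heq : (fun r' => deriv (fun θ' => v θ' r') θ * deriv (v θ) r')
        =ᶠ[nhds r] fun r' => fderiv ℝ F (θ, r') ((1, 0) : ℝ × ℝ)
          * fderiv ℝ F (θ, r') ((0, 1) : ℝ × ℝ) := by
      filter_upwards [hrpos] with r' hr'
      simp only [(hvθ (θ, r') hr').deriv, (hvr (θ, r') hr').deriv]
    rw [heq.deriv_eq, hprod.deriv, hsymm (0, 1) (1, 0)]
  -- the θ-derivative of the energy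
  have hp1 : HasDerivAt (fun θ' => fderiv ℝ F (θ', r) ((1, 0) : ℝ × ℝ)) A θ :=
    hEval (1, 0) (fun t => (t, r)) (1, 0) θ (hlineθ r θ) rfl
  have hp2 : HasDerivAt (fun θ' => fderiv ℝ F (θ', r) ((0, 1) : ℝ × ℝ)) B θ :=
    hEval (0, 1) (fun t => (t, r)) (1, 0) θ (hlineθ r θ) rfl
  have hp0 : HasDerivAt (fun θ' => v θ' r) b θ := hvθ (θ, r) hmem
  have hE : HasDerivAt (fun θ' =>
      ε / 2 * ((fderiv ℝ F (θ', r) ((1, 0) : ℝ × ℝ)) ^ 2 / r ^ 2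
          + (fderiv ℝ F (θ', r) ((0, 1) : ℝ × ℝ)) ^ 2)
        + 1 / (2 * ε) * ((v θ' r) ^ 2 - 1) ^ 2)
      (ε / 2 * ((2 * b * A) / r ^ 2 + 2 * c * B)
        + 1 / (2 * ε) * (2 * (a ^ 2 - 1) * (2 * a * b))) θ := by
    have h1 : HasDerivAt (fun θ' => (fderiv ℝ F (θ', r) ((1, 0) : ℝ × ℝ)) ^ 2 / r ^ 2)
        ((2 * b * A) / r ^ 2) θ := by
      simpa [hb] using (hp1.pow 2).div_const (r ^ 2)
    have h2 : HasDerivAt (fun θ' => (fderiv ℝ F (θ', r) ((0, 1) : ℝ × ℝ)) ^ 2)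
        (2 * c * B) θ := by
      simpa [hc] using hp2.fun_pow 2
    have h3 : HasDerivAt (fun θ' => ((v θ' r) ^ 2 - 1) ^ 2)
        (2 * (a ^ 2 - 1) * (2 * a * b)) θ := by
      have := ((hp0.pow 2).sub_const 1).fun_pow 2
      simpa [ha] using this
    exact ((h1.add h2).const_mul (ε / 2)).add (h3.const_mul (1 / (2 * ε)))
  have hEfun : (fun θ' => ε / 2 * ((deriv (fun θ'' => v θ'' r) θ') ^ 2 / r ^ 2
        + (deriv (v θ') r) ^ 2) + 1 / (2 * ε) * ((v θ' r) ^ 2 - 1) ^ 2)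
      = fun θ' => ε / 2 * ((fderiv ℝ F (θ', r) ((1, 0) : ℝ × ℝ)) ^ 2 / r ^ 2
          + (fderiv ℝ F (θ', r) ((0, 1) : ℝ × ℝ)) ^ 2)
        + 1 / (2 * ε) * ((v θ' r) ^ 2 - 1) ^ 2 := by
    funext θ'
    rw [(hvθ (θ', r) hr).deriv, (hvr (θ', r) hr).deriv]
  rw [hEfun, hE.deriv, hmix, hbd, hcd]
  -- the PDE at (θ, r)
  have hP := hpde θ r hr
  rw [hvθθ, hvrr, hcd, ← ha] at hP
  have hε' : (ε : ℝ) ≠ 0 := ne_of_gt hε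
  have hr' : (r : ℝ) ≠ 0 := ne_of_gt hr
  field_simp at hP ⊢
  linear_combination b * hP
end

section
/- Let F : ℝ → ℝ be a smooth function with F(x) > 0 whenever |x| ≠ 1, F(±1) = 0, and such that there exist constants 0 < c ≤ C with c(1 − |x|)² ≤ F(x) ≤ C(1 − |x|)² for all |x| ≤ 2. Set f₀ := F′ and f₁(u) := √(2F(u)) for u ∈ [−1,1], f₁(u) := −√(2F(u)) otherwise. Then the solution q : ℝ → ℝ of the ODE q′(s) = f₁(q(s)) with q(0) = 0 is defined on all of ℝ, satisfies −1 < q(s) < 1 for all s, satisfies the second-order equation −q″(s) + f₀(q(s)) = 0 for all s ∈ ℝ, and q(s) → ±1 as s → ±∞. -/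
open Set Filter intervalIntegral Real


/-- `f₁ = √(2F)` on `[−1,1]` and `−√(2F)` elsewhere, as in (3.4). -/
noncomputable def fOne (F : ℝ → ℝ) (u : ℝ) : ℝ :=
  if u ∈ Set.Icc (-1 : ℝ) 1 then Real.sqrt (2 * F u) else -Real.sqrt (2 * F u)

/-- existence of the optimal interface profile: the solution of the
first-order equation (3.13), `q′ = f₁(q)`, `q(0) = 0`, is globally defined, takes
values in `(−1,1)`, solves the second-order profile equation (3.12),
`−q″ + f₀(q) = 0` with `f₀ = F′`, and tends to `±1` at `±∞`. -/
theorem optimal_profile_exists (F : ℝ → ℝ) (hF : ContDiff ℝ (⊤ : ℕ∞) F)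
    (hFpos : ∀ x : ℝ, |x| ≠ 1 → 0 < F x)
    (hFm : F (-1) = 0) (hFp : F 1 = 0)
    (c C : ℝ) (hc : 0 < c) (hcC : c ≤ C)
    (hlow : ∀ x : ℝ, |x| ≤ 2 → c * (1 - |x|) ^ 2 ≤ F x)
    (hupp : ∀ x : ℝ, |x| ≤ 2 → F x ≤ C * (1 - |x|) ^ 2) :
    ∃ q : ℝ → ℝ,
      q 0 = 0 ∧
      (∀ s : ℝ, HasDerivAt q (fOne F (q s)) s) ∧
      (∀ s : ℝ, q s ∈ Set.Ioo (-1 : ℝ) 1) ∧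
      (∀ s : ℝ, deriv (deriv q) s = deriv F (q s)) ∧
      Filter.Tendsto q Filter.atTop (nhds 1) ∧
      Filter.Tendsto q Filter.atBot (nhds (-1)) := by

  classical
  have hFcont : Continuous F := hF.continuous
  have hFd : ∀ x, HasDerivAt F (deriv F x) x :=
    fun x => (hF.differentiable (by simp) x).hasDerivAt
  set I : Set ℝ := Set.Ioo (-1 : ℝ) 1 with hIdef
  have hposI : ∀ u ∈ I, 0 < F u := by
    intro u hu
    exact hFpos u (ne_of_lt (abs_lt.2 ⟨hu.1, hu.2⟩))
  have hsq : ∀ u ∈ I, 0 < Real.sqrt (2 * F u) := by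
    intro u hu
    exact Real.sqrt_pos.2 (by have := hposI u hu; linarith)
  set h : ℝ → ℝ := fun u => (Real.sqrt (2 * F u))⁻¹ with hhdef
  have hhpos : ∀ u ∈ I, 0 < h u := fun u hu => inv_pos.2 (hsq u hu)
  have hsqcont : Continuous fun u => Real.sqrt (2 * F u) :=
    Real.continuous_sqrt.comp (continuous_const.mul hFcont)
  have hhcont : ContinuousOn h I :=
    hsqcont.continuousOn.inv₀ fun u hu => ne_of_gt (hsq u hu)
  have hint : ∀ a ∈ I, ∀ b ∈ I, IntervalIntegrable h MeasureTheory.volume a b := by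
    intro a ha b hb
    exact (hhcont.mono (Set.ordConnected_Ioo.uIcc_subset ha hb)).intervalIntegrable
  set G : ℝ → ℝ := fun u => ∫ t in (0 : ℝ)..u, h t with hGdef
  have h0I : (0 : ℝ) ∈ I := by constructor <;> norm_num
  have hG : ∀ u ∈ I, HasDerivAt G (h u) u := by
    intro u hu
    exact intervalIntegral.integral_hasDerivAt_right (hint 0 h0I u hu)
      (hsqcont.measurable.inv.aestronglyMeasurable.stronglyMeasurableAtFilter)
      (hhcont.continuousAt (Ioo_mem_nhds hu.1 hu.2))
  have hGc : ContinuousOn G I := fun u hu => ((hG u hu).continuousAt).continuousWithinAt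
  have hGmono : StrictMonoOn G I := by
    apply strictMonoOn_of_deriv_pos (convex_Ioo _ _) hGc
    intro x hx
    rw [interior_Ioo] at hx
    rw [(hG x hx).deriv]
    exact hhpos x hx
  have hG0 : G 0 = 0 := intervalIntegral.integral_same
  -- bounds
  set K : ℝ := Real.sqrt (2 * C) with hKdef
  have hK : 0 < K := Real.sqrt_pos.2 (by linarith)
  have hsqub : ∀ t ∈ I, Real.sqrt (2 * F t) ≤ K * (1 - |t|) := by
    intro t ht
    have habs : |t| ≤ 2 := by rw [abs_le]; constructor <;> [linarith [ht.1]; linarith [ht.2]]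
    have h1 : (0:ℝ) ≤ 1 - |t| := by
      have := abs_lt.2 ⟨ht.1, ht.2⟩; linarith
    have h2 : 2 * F t ≤ (2 * C) * (1 - |t|) ^ 2 := by
      have := hupp t habs; nlinarith
    calc Real.sqrt (2 * F t) ≤ Real.sqrt ((2 * C) * (1 - |t|) ^ 2) := Real.sqrt_le_sqrt h2
      _ = K * (1 - |t|) := by
          rw [Real.sqrt_mul (by linarith), Real.sqrt_sq h1]
  have hhlb : ∀ t ∈ I, (K * (1 - |t|))⁻¹ ≤ h t := by
    intro t ht
    exact inv_anti₀ (hsq t ht) (hsqub t ht)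
  -- lower bound near 1
  have hlowbound : ∀ u ∈ Set.Ioo (0:ℝ) 1, K⁻¹ * (-Real.log (1 - u)) ≤ G u := by
    intro u hu
    have huI : u ∈ I := ⟨by linarith [hu.1], hu.2⟩
    have hIcc01 : Set.uIcc (0:ℝ) u = Set.Icc 0 u := Set.uIcc_of_le (le_of_lt hu.1)
    have hne1 : ∀ t ∈ Set.Icc (0:ℝ) u, (1:ℝ) - t ≠ 0 := by
      intro t ht hc
      have := ht.2; have := hu.2; linarith
    have hgcont : ContinuousOn (fun t : ℝ => K⁻¹ * (1 - t)⁻¹) (Set.uIcc (0:ℝ) u) := by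
      rw [hIcc01]
      exact continuousOn_const.mul
        (((continuous_const.sub continuous_id).continuousOn).inv₀ hne1)
    have hgint := hgcont.intervalIntegrable (μ := MeasureTheory.volume)
    have hftc : ∫ t in (0:ℝ)..u, K⁻¹ * (1 - t)⁻¹ = K⁻¹ * (-Real.log (1 - u)) := by
      have hD : ∀ t ∈ Set.uIcc (0:ℝ) u,
          HasDerivAt (fun t : ℝ => -(K⁻¹ * Real.log (1 - t))) (K⁻¹ * (1 - t)⁻¹) t := by
        intro t ht
        rw [hIcc01] at ht
        have hne : (1:ℝ) - t ≠ 0 := hne1 t ht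
        have hlin : HasDerivAt (fun t : ℝ => 1 - t) (-1 : ℝ) t := (hasDerivAt_id t).const_sub 1
        have hlog : HasDerivAt (fun t : ℝ => Real.log (1 - t)) ((1 - t)⁻¹ * -1) t :=
          (Real.hasDerivAt_log hne).comp t hlin
        have := (hlog.const_mul K⁻¹).neg
        refine this.congr_deriv ?_
        ring
      rw [intervalIntegral.integral_eq_sub_of_hasDerivAt hD hgint]
      norm_num
    have hmono : ∫ t in (0:ℝ)..u, K⁻¹ * (1 - t)⁻¹ ≤ ∫ t in (0:ℝ)..u, h t := by
      apply intervalIntegral.integral_mono_on (le_of_lt hu.1) hgint (hint 0 h0I u huI)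
      intro t ht
      have htI : t ∈ I := ⟨by linarith [ht.1], lt_of_le_of_lt ht.2 hu.2⟩
      have := hhlb t htI
      rwa [abs_of_nonneg ht.1, mul_inv] at this
    exact le_trans (le_of_eq hftc.symm) hmono
  -- upper bound near -1
  have hupbound : ∀ u ∈ Set.Ioo (-1:ℝ) 0, G u ≤ K⁻¹ * Real.log (1 + u) := by
    intro u hu
    have huI : u ∈ I := ⟨hu.1, by linarith [hu.2]⟩
    have hIcc01 : Set.uIcc u (0:ℝ) = Set.Icc u 0 := Set.uIcc_of_le (le_of_lt hu.2)
    have hne1 : ∀ t ∈ Set.Icc u (0:ℝ), (1:ℝ) + t ≠ 0 := by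
      intro t ht hc
      have := ht.1; have := hu.1; linarith
    have hgcont : ContinuousOn (fun t : ℝ => K⁻¹ * (1 + t)⁻¹) (Set.uIcc u (0:ℝ)) := by
      rw [hIcc01]
      exact continuousOn_const.mul
        (((continuous_const.add continuous_id).continuousOn).inv₀ hne1)
    have hgint := hgcont.intervalIntegrable (μ := MeasureTheory.volume)
    have hftc : ∫ t in u..(0:ℝ), K⁻¹ * (1 + t)⁻¹ = -(K⁻¹ * Real.log (1 + u)) := by
      have hD : ∀ t ∈ Set.uIcc u (0:ℝ),
          HasDerivAt (fun t : ℝ => K⁻¹ * Real.log (1 + t)) (K⁻¹ * (1 + t)⁻¹) t := by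
        intro t ht
        rw [hIcc01] at ht
        have hne : (1:ℝ) + t ≠ 0 := hne1 t ht
        have hlin : HasDerivAt (fun t : ℝ => 1 + t) (1 : ℝ) t := (hasDerivAt_id t).const_add 1
        have hlog : HasDerivAt (fun t : ℝ => Real.log (1 + t)) ((1 + t)⁻¹ * 1) t :=
          (Real.hasDerivAt_log hne).comp t hlin
        have := hlog.const_mul K⁻¹
        refine this.congr_deriv ?_
        ring
      rw [intervalIntegral.integral_eq_sub_of_hasDerivAt hD hgint]
      norm_num
    have hmono : ∫ t in u..(0:ℝ), K⁻¹ * (1 + t)⁻¹ ≤ ∫ t in u..(0:ℝ), h t := by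
      apply intervalIntegral.integral_mono_on (le_of_lt hu.2) hgint (hint u huI 0 h0I)
      intro t ht
      have htI : t ∈ I := ⟨lt_of_lt_of_le hu.1 ht.1, by linarith [ht.2]⟩
      have := hhlb t htI
      rwa [abs_of_nonpos ht.2, sub_neg_eq_add, mul_inv] at this
    have hsymm : G u = -∫ t in u..(0:ℝ), h t := intervalIntegral.integral_symm u 0
    rw [hsymm]
    linarith [hmono, hftc.symm.le, hftc.le]
  -- tendsto atTop at 1⁻
  have htop : Tendsto G (nhdsWithin 1 (Set.Iio 1)) atTop := by
    have h1 : Tendsto (fun u : ℝ => 1 - u) (nhdsWithin 1 (Set.Iio 1))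
        (nhdsWithin 0 (Set.Ioi 0)) := by
      apply tendsto_nhdsWithin_iff.2
      constructor
      · have hcont : Continuous fun u : ℝ => 1 - u := continuous_const.sub continuous_id
        have := hcont.tendsto (1:ℝ)
        simp only [sub_self] at this
        exact this.mono_left nhdsWithin_le_nhds
      · filter_upwards [self_mem_nhdsWithin] with u hu
        simp only [Set.mem_Iio] at hu
        simp only [Set.mem_Ioi]
        linarith
    have h2 : Tendsto (fun u : ℝ => Real.log (1 - u)) (nhdsWithin 1 (Set.Iio 1)) atBot :=
      Real.tendsto_log_nhdsGT_zero.comp h1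
    have h3 : Tendsto (fun u : ℝ => K⁻¹ * (-Real.log (1 - u)))
        (nhdsWithin 1 (Set.Iio 1)) atTop :=
      (tendsto_neg_atBot_atTop.comp h2).const_mul_atTop (inv_pos.2 hK)
    apply tendsto_atTop_mono' _ _ h3
    filter_upwards [Ioo_mem_nhdsLT_of_mem
      (⟨by norm_num, le_refl _⟩ : (1:ℝ) ∈ Set.Ioc 0 1)] with u hu
    exact hlowbound u hu
  have hbot : Tendsto G (nhdsWithin (-1) (Set.Ioi (-1))) atBot := by
    have h1 : Tendsto (fun u : ℝ => 1 + u) (nhdsWithin (-1) (Set.Ioi (-1)))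
        (nhdsWithin 0 (Set.Ioi 0)) := by
      apply tendsto_nhdsWithin_iff.2
      constructor
      · have hcont : Continuous fun u : ℝ => 1 + u := continuous_const.add continuous_id
        have := hcont.tendsto (-1:ℝ)
        simp only [add_neg_cancel] at this
        exact this.mono_left nhdsWithin_le_nhds
      · filter_upwards [self_mem_nhdsWithin] with u hu
        simp only [Set.mem_Ioi] at hu ⊢
        linarith
    have h2 : Tendsto (fun u : ℝ => Real.log (1 + u))
        (nhdsWithin (-1) (Set.Ioi (-1))) atBot :=
      Real.tendsto_log_nhdsGT_zero.comp h1
    have h3 : Tendsto (fun u : ℝ => K⁻¹ * Real.log (1 + u))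
        (nhdsWithin (-1) (Set.Ioi (-1))) atBot :=
      h2.const_mul_atBot (inv_pos.2 hK)
    apply tendsto_atBot_mono' _ _ h3
    filter_upwards [Ioo_mem_nhdsGT_of_mem
      (⟨le_refl _, by norm_num⟩ : (-1:ℝ) ∈ Set.Ico (-1) 0)] with u hu
    exact hupbound u hu
  -- surjectivity
  have hIoomem : Set.Ioo (-1:ℝ) 1 ∈ nhdsWithin (1:ℝ) (Set.Iio 1) :=
    Ioo_mem_nhdsLT_of_mem ⟨by norm_num, le_refl _⟩
  have hIoomem' : Set.Ioo (-1:ℝ) 1 ∈ nhdsWithin (-1:ℝ) (Set.Ioi (-1)) :=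
    Ioo_mem_nhdsGT_of_mem ⟨le_refl _, by norm_num⟩
  have hsurj : ∀ y : ℝ, ∃ u ∈ I, G u = y := by
    intro y
    have hev : ∀ᶠ u in nhdsWithin (1:ℝ) (Set.Iio 1), u ∈ I := hIoomem
    have hev' : ∀ᶠ u in nhdsWithin (-1:ℝ) (Set.Ioi (-1)), u ∈ I := hIoomem'
    obtain ⟨b, hby, hbI⟩ := ((htop.eventually (eventually_gt_atTop y)).and hev).exists
    obtain ⟨a, hay, haI⟩ := ((hbot.eventually (eventually_lt_atBot y)).and hev').exists
    have hab : a ≤ b := by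
      by_contra hba
      push_neg at hba
      have := hGmono hbI haI hba
      linarith
    have hsub : Set.Icc a b ⊆ I := Set.ordConnected_Ioo.out haI hbI
    have := intermediate_value_Icc hab (hGc.mono hsub)
    obtain ⟨u, hu, hGu⟩ := this ⟨le_of_lt hay, le_of_lt hby⟩
    exact ⟨u, hsub hu, hGu⟩
  set q : ℝ → ℝ := fun y => (hsurj y).choose with hqdef
  have hqI : ∀ y, q y ∈ I := fun y => (hsurj y).choose_spec.1
  have hqG : ∀ y, G (q y) = y := fun y => (hsurj y).choose_spec.2
  have hltiff : ∀ u ∈ I, ∀ y : ℝ, u < q y ↔ G u < y := by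
    intro u hu y
    have := hGmono.lt_iff_lt hu (hqI y)
    rw [hqG y] at this
    exact this.symm
  have hltiff' : ∀ u ∈ I, ∀ y : ℝ, q y < u ↔ y < G u := by
    intro u hu y
    have := hGmono.lt_iff_lt (hqI y) hu
    rw [hqG y] at this
    exact this.symm
  have hq0 : q 0 = 0 := by
    have := hGmono.injOn (hqI 0) h0I (by rw [hqG 0, hG0])
    exact this
  -- continuity of q
  have hqcont : ∀ y, ContinuousAt q y := by
    intro y
    rw [ContinuousAt]
    apply tendsto_order.2
    constructor
    · intro a ha
      by_cases hA : -1 < a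
      · have haI : a ∈ I := ⟨hA, lt_trans ha (hqI y).2⟩
        have : G a < y := (hltiff a haI y).1 ha
        filter_upwards [Ioi_mem_nhds this] with z hz
        exact (hltiff a haI z).2 hz
      · push_neg at hA
        filter_upwards with z
        exact lt_of_le_of_lt hA (hqI z).1
    · intro b hb
      by_cases hB : b < 1
      · have hbI : b ∈ I := ⟨lt_trans (hqI y).1 hb, hB⟩
        have : y < G b := (hltiff' b hbI y).1 hb
        filter_upwards [Iio_mem_nhds this] with z hz
        exact (hltiff' b hbI z).2 hz
      · push_neg at hB
        filter_upwards with z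
        exact lt_of_lt_of_le (hqI z).2 hB
  have hIcc : ∀ y, q y ∈ Set.Icc (-1:ℝ) 1 := fun y => Set.Ioo_subset_Icc_self (hqI y)
  have hderivq : ∀ s, HasDerivAt q (fOne F (q s)) s := by
    intro s
    have h1 : HasDerivAt q ((h (q s))⁻¹) s :=
      HasDerivAt.of_local_left_inverse (hqcont s) (hG _ (hqI s))
        (ne_of_gt (hhpos _ (hqI s))) (Filter.Eventually.of_forall hqG)
    have : (h (q s))⁻¹ = fOne F (q s) := by
      rw [fOne, if_pos (hIcc s)]
      simp [hhdef]
    rwa [this] at h1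
  refine ⟨q, hq0, hderivq, hqI, ?_, ?_, ?_⟩
  · -- second order equation
    intro s
    have hd : deriv q = fun z => Real.sqrt (2 * F (q z)) := by
      funext z
      rw [(hderivq z).deriv, fOne, if_pos (hIcc z)]
    rw [hd]
    have hq' : HasDerivAt q (Real.sqrt (2 * F (q s))) s := by
      have := hderivq s
      rwa [fOne, if_pos (hIcc s)] at this
    have hF' : HasDerivAt (fun u => 2 * F u) (2 * deriv F (q s)) (q s) :=
      (hFd (q s)).const_mul 2
    have hs' : HasDerivAt Real.sqrt (1 / (2 * Real.sqrt (2 * F (q s)))) (2 * F (q s)) :=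
      Real.hasDerivAt_sqrt (ne_of_gt (by have := hposI _ (hqI s); linarith))
    have hcomp := hs'.comp s (hF'.comp s hq')
    have heq : (1 / (2 * Real.sqrt (2 * F (q s)))) * (2 * deriv F (q s) * Real.sqrt (2 * F (q s)))
        = deriv F (q s) := by
      have hne : Real.sqrt (2 * F (q s)) ≠ 0 := ne_of_gt (hsq _ (hqI s))
      generalize Real.sqrt (2 * F (q s)) = a at hne ⊢
      field_simp
    have : HasDerivAt (fun z => Real.sqrt (2 * F (q z))) (deriv F (q s)) s := by
      rw [← heq]
      exact hcomp
    exact this.deriv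
  · -- tendsto atTop
    apply tendsto_order.2
    constructor
    · intro a ha
      by_cases hA : -1 < a
      · have haI : a ∈ I := ⟨hA, ha⟩
        filter_upwards [eventually_gt_atTop (G a)] with y hy
        exact (hltiff a haI y).2 hy
      · push_neg at hA
        filter_upwards with y
        exact lt_of_le_of_lt hA (hqI y).1
    · intro b hb
      filter_upwards with y
      exact lt_trans (hqI y).2 hb
  · -- tendsto atBot
    apply tendsto_order.2
    constructor
    · intro a ha
      filter_upwards with y
      exact lt_trans ha (hqI y).1
    · intro b hb
      by_cases hB : b < 1
      · have hbI : b ∈ I := ⟨hb, hB⟩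
        filter_upwards [eventually_lt_atBot (G b)] with y hy
        exact (hltiff' b hbI y).2 hy
      · push_neg at hB
        filter_upwards with y
        exact lt_of_lt_of_le (hqI y).2 hB
end

section
/- Let F : ℝ → ℝ be a smooth function with F(x) > 0 whenever |x| ≠ 1, F(±1) = 0, and such that there exist constants 0 < c ≤ C with c(1 − |x|)² ≤ F(x) ≤ C(1 − |x|)² for all |x| ≤ 2. Set f₁(u) := √(2F(u)) for u ∈ [−1,1], f₁(u) := −√(2F(u)) otherwise, and c₀ := ∫_{−1}^{1} f₁(u) du. Let ε > 0 and let q̃ : ℝ → ℝ be continuously differentiable with q̃(s) → ±1 as s → ±∞. Then c₀ ≤ ∫_{−∞}^{∞} [ (ε/2) q̃′(s)² + (1/ε) F(q̃(s)) ] ds, and equality holds if and only if ε q̃′(s) = f₁(q̃(s)) for all s ∈ ℝ. -/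
open MeasureTheory

lemma fOne_abs (F : ℝ → ℝ) (u : ℝ) : |fOne F u| = Real.sqrt (2 * F u) := by
  unfold fOne
  split <;> simp [abs_of_nonneg (Real.sqrt_nonneg _)]

lemma fOne_sq (F : ℝ → ℝ) (u : ℝ) (h : 0 ≤ F u) : (fOne F u) ^ 2 = 2 * F u := by
  rw [← sq_abs, fOne_abs, Real.sq_sqrt (by linarith)]

lemma fOne_continuous (F : ℝ → ℝ) (hFc : Continuous F) (hFm : F (-1) = 0)
    (hFp : F 1 = 0) : Continuous (fOne F) := by
  have hs : Continuous fun u => Real.sqrt (2 * F u) :=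
    Real.continuous_sqrt.comp (continuous_const.mul hFc)
  rw [continuous_iff_continuousAt]
  intro x
  by_cases hx1 : x = 1 ∨ x = -1
  · have hval : Real.sqrt (2 * F x) = 0 := by
      rcases hx1 with rfl | rfl <;> simp [hFp, hFm]
    have h0 : fOne F x = 0 := by
      unfold fOne; split <;> simp [hval]
    rw [ContinuousAt, h0]
    have h2 : Filter.Tendsto (fun u => Real.sqrt (2 * F u)) (nhds x) (nhds 0) := by
      have := hs.continuousAt (x := x)
      rwa [ContinuousAt, hval] at this
    exact squeeze_zero_norm (fun u => le_of_eq (by rw [Real.norm_eq_abs, fOne_abs])) h2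
  · push_neg at hx1
    by_cases hx : x ∈ Set.Icc (-1 : ℝ) 1
    · have hoo : x ∈ Set.Ioo (-1 : ℝ) 1 :=
        ⟨lt_of_le_of_ne hx.1 (Ne.symm hx1.2), lt_of_le_of_ne hx.2 hx1.1⟩
      refine hs.continuousAt.congr ?_
      filter_upwards [Ioo_mem_nhds hoo.1 hoo.2] with u hu
      simp [fOne, Set.mem_Icc.mpr ⟨hu.1.le, hu.2.le⟩]
    · refine (hs.neg.continuousAt).congr ?_
      filter_upwards [isClosed_Icc.isOpen_compl.mem_nhds hx] with u hu
      simp only [fOne, if_neg hu, Pi.neg_apply]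

lemma amgm_aux {ε : ℝ} (hε : 0 < ε) (t a : ℝ) (ht : 0 ≤ t) :
    ε / 2 * a ^ 2 + 1 / ε * t - Real.sqrt (2 * t) * |a|
      = (ε * |a| - Real.sqrt (2 * t)) ^ 2 / (2 * ε) := by
  set r := Real.sqrt (2 * t) with hr
  have h2 : r ^ 2 = 2 * t := Real.sq_sqrt (by linarith)
  have ha : |a| ^ 2 = a ^ 2 := sq_abs a
  rw [eq_div_iff (by positivity : (2 : ℝ) * ε ≠ 0)]
  field_simp
  linear_combination -h2 - ε ^ 2 * ha

lemma ode_pointwise {F : ℝ → ℝ} {ε u a : ℝ} (hε : 0 < ε) (h0 : 0 ≤ F u)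
    (heq : ε / 2 * a ^ 2 + 1 / ε * F u = fOne F u * a) : ε * a = fOne F u := by
  have habs : |fOne F u| = Real.sqrt (2 * F u) := fOne_abs F u
  have hAM : |fOne F u * a| ≤ ε / 2 * a ^ 2 + 1 / ε * F u := by
    rw [abs_mul, habs, ← sub_nonneg, amgm_aux hε (F u) a h0]
    positivity
  have h3 : Real.sqrt (2 * F u) * |a| = ε / 2 * a ^ 2 + 1 / ε * F u := by
    refine le_antisymm ?_ ?_
    · rw [← habs, ← abs_mul]; exact hAM
    · calc ε / 2 * a ^ 2 + 1 / ε * F u = fOne F u * a := heq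
        _ ≤ |fOne F u * a| := le_abs_self _
        _ = Real.sqrt (2 * F u) * |a| := by rw [abs_mul, habs]
  have h4 : (ε * |a| - Real.sqrt (2 * F u)) ^ 2 / (2 * ε) = 0 := by
    rw [← amgm_aux hε (F u) a h0]
    linarith [h3]
  have h5 : ε * |a| = Real.sqrt (2 * F u) := by
    have h6 : (ε * |a| - Real.sqrt (2 * F u)) ^ 2 = 0 := by
      rcases div_eq_zero_iff.mp h4 with hcase | hcase
      · exact hcase
      · linarith
    have h7 := (pow_eq_zero_iff two_ne_zero).mp h6
    linarith
  by_cases hazero : a = 0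
  · subst hazero
    have h7 : Real.sqrt (2 * F u) = 0 := by rw [← h5]; simp
    have h8 : fOne F u = 0 := abs_eq_zero.mp (by rw [habs, h7])
    rw [h8]; ring
  · have h7 : fOne F u * a = ε * a * a := by
      calc fOne F u * a = ε / 2 * a ^ 2 + 1 / ε * F u := heq.symm
        _ = Real.sqrt (2 * F u) * |a| := h3.symm
        _ = ε * |a| * |a| := by rw [← h5]
        _ = ε * a * a := by rw [mul_assoc, mul_assoc, abs_mul_abs_self]
    exact mul_right_cancel₀ hazero h7.symm

/-- the optimality property (3.15): for any C¹ transition `qt` between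
`−1` and `1`, the energy `∫ (ε/2)qt′² + (1/ε)F(qt)` is at least `c₀ = ∫_{−1}^{1} f₁`,
with equality exactly when `ε qt′ = f₁(qt)` everywhere.  The energy is written as a
lower Lebesgue integral so that the statement also covers the case of infinite
energy. -/
theorem profile_optimality (F : ℝ → ℝ) (hF : ContDiff ℝ (⊤ : ℕ∞) F)
    (hFpos : ∀ x : ℝ, |x| ≠ 1 → 0 < F x)
    (hFm : F (-1) = 0) (hFp : F 1 = 0)
    (c C : ℝ) (hc : 0 < c) (hcC : c ≤ C)
    (hlow : ∀ x : ℝ, |x| ≤ 2 → c * (1 - |x|) ^ 2 ≤ F x)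
    (hupp : ∀ x : ℝ, |x| ≤ 2 → F x ≤ C * (1 - |x|) ^ 2)
    (ε : ℝ) (hε : 0 < ε) (qt : ℝ → ℝ) (hqt : ContDiff ℝ 1 qt)
    (htop : Filter.Tendsto qt Filter.atTop (nhds 1))
    (hbot : Filter.Tendsto qt Filter.atBot (nhds (-1))) :
    ENNReal.ofReal (∫ u in (-1 : ℝ)..1, fOne F u)
      ≤ (∫⁻ s : ℝ, ENNReal.ofReal (ε / 2 * (deriv qt s) ^ 2 + 1 / ε * F (qt s))) ∧
    ((∫⁻ s : ℝ, ENNReal.ofReal (ε / 2 * (deriv qt s) ^ 2 + 1 / ε * F (qt s)))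
        = ENNReal.ofReal (∫ u in (-1 : ℝ)..1, fOne F u)
      ↔ ∀ s : ℝ, ε * deriv qt s = fOne F (qt s)) := by
  have hFc : Continuous F := hF.continuous
  have hF0 : ∀ x : ℝ, 0 ≤ F x := by
    intro x
    by_cases hx : |x| = 1
    · rcases (abs_eq (by norm_num : (0:ℝ) ≤ 1)).mp hx with rfl | rfl
      · rw [hFp]
      · rw [hFm]
    · exact (hFpos x hx).le
  have hf1c : Continuous (fOne F) := fOne_continuous F hFc hFm hFp
  have hq' : ∀ s, HasDerivAt qt (deriv qt s) s :=
    fun s => (hqt.differentiable one_ne_zero s).hasDerivAt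
  have hq'c : Continuous (deriv qt) := hqt.continuous_deriv le_rfl
  set e : ℝ → ℝ := fun s => ε / 2 * (deriv qt s) ^ 2 + 1 / ε * F (qt s) with he_def
  set h : ℝ → ℝ := fun s => fOne F (qt s) * deriv qt s with hh_def
  have hAM : ∀ u a : ℝ, |fOne F u * a| ≤ ε / 2 * a ^ 2 + 1 / ε * F u := by
    intro u a
    rw [abs_mul, fOne_abs, ← sub_nonneg, amgm_aux hε (F u) a (hF0 u)]
    positivity
  have habs : ∀ s, |h s| ≤ e s := fun s => hAM (qt s) (deriv qt s)
  have he_nonneg : ∀ s, 0 ≤ e s := fun s => le_trans (abs_nonneg _) (habs s)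
  have he_cont : Continuous e :=
    (continuous_const.mul (hq'c.pow 2)).add
      (continuous_const.mul (hFc.comp hqt.continuous))
  have hh_cont : Continuous h := (hf1c.comp hqt.continuous).mul hq'c
  set G : ℝ → ℝ := fun u => ∫ t in (0:ℝ)..u, fOne F t with hG_def
  have hG : ∀ u, HasDerivAt G (fOne F u) u := by
    intro u
    rw [hG_def]
    exact intervalIntegral.integral_hasDerivAt_right (hf1c.intervalIntegrable 0 u)
      hf1c.stronglyMeasurable.stronglyMeasurableAtFilter hf1c.continuousAt
  have hGc : Continuous G :=
    continuous_iff_continuousAt.mpr fun u => (hG u).differentiableAt.continuousAt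
  have hGq : ∀ s, HasDerivAt (fun x => G (qt x)) (h s) s :=
    fun s => (hG (qt s)).comp s (hq' s)
  have hGtop : Filter.Tendsto (fun x => G (qt x)) Filter.atTop (nhds (G 1)) :=
    (hGc.tendsto 1).comp htop
  have hGbot : Filter.Tendsto (fun x => G (qt x)) Filter.atBot (nhds (G (-1))) :=
    (hGc.tendsto (-1)).comp hbot
  have hc0 : (∫ u in (-1 : ℝ)..1, fOne F u) = G 1 - G (-1) := by
    have h1 := intervalIntegral.integral_add_adjacent_intervals
      (a := (-1:ℝ)) (b := 0) (c := 1) (μ := volume)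
      (hf1c.intervalIntegrable _ _) (hf1c.intervalIntegrable _ _)
    have h2 : G (-1) = - ∫ t in (-1:ℝ)..0, fOne F t := by
      rw [hG_def]; exact intervalIntegral.integral_symm (-1) 0
    rw [← h1, h2, hG_def]
    ring
  have hc0nn : 0 ≤ ∫ u in (-1 : ℝ)..1, fOne F u := by
    apply intervalIntegral.integral_nonneg (by norm_num : (-1:ℝ) ≤ 1)
    intro u hu
    simp only [fOne, if_pos hu]
    exact Real.sqrt_nonneg _
  have main : Integrable e →
      ((∫ s, h s) = G 1 - G (-1) ∧ (∫ u in (-1 : ℝ)..1, fOne F u) ≤ ∫ s, e s) := by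
    intro he_int
    have hh_int : Integrable h := by
      refine he_int.mono' hh_cont.aestronglyMeasurable ?_
      exact Filter.Eventually.of_forall fun s => by
        rw [Real.norm_eq_abs]; exact habs s
    have hint : (∫ s, h s) = G 1 - G (-1) :=
      integral_of_hasDerivAt_of_tendsto hGq hh_int hGbot hGtop
    refine ⟨hint, ?_⟩
    rw [hc0, ← hint]
    exact integral_mono hh_int he_int fun s => (le_abs_self _).trans (habs s)
  have hlii : (∫⁻ s : ℝ, ENNReal.ofReal (ε / 2 * (deriv qt s) ^ 2 + 1 / ε * F (qt s)))
      = ∫⁻ s, ENNReal.ofReal (e s) := rfl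
  have hintofin : Integrable e →
      (∫⁻ s, ENNReal.ofReal (e s)) = ENNReal.ofReal (∫ s, e s) := fun he_int =>
    (ofReal_integral_eq_lintegral_ofReal he_int
      (Filter.Eventually.of_forall he_nonneg)).symm
  constructor
  · by_cases hfin : (∫⁻ s, ENNReal.ofReal (e s)) = ⊤
    · rw [hlii, hfin]; exact le_top
    · have he_int : Integrable e :=
        ⟨he_cont.aestronglyMeasurable,
          (hasFiniteIntegral_iff_ofReal (Filter.Eventually.of_forall he_nonneg)).2
            (lt_top_iff_ne_top.2 hfin)⟩
      rw [hlii, hintofin he_int]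
      exact ENNReal.ofReal_le_ofReal (main he_int).2
  · constructor
    · intro heq
      rw [hlii] at heq
      have he_int : Integrable e :=
        ⟨he_cont.aestronglyMeasurable,
          (hasFiniteIntegral_iff_ofReal (Filter.Eventually.of_forall he_nonneg)).2
            (heq ▸ ENNReal.ofReal_lt_top)⟩
      have hie : (∫ s, e s) = ∫ u in (-1 : ℝ)..1, fOne F u :=
        (ENNReal.ofReal_eq_ofReal_iff (integral_nonneg he_nonneg) hc0nn).mp
          ((hintofin he_int).symm.trans heq)
      have hh_int : Integrable h := by
        refine he_int.mono' hh_cont.aestronglyMeasurable ?_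
        exact Filter.Eventually.of_forall fun s => by
          rw [Real.norm_eq_abs]; exact habs s
      have hzero : (∫ s, e s - h s) = 0 := by
        rw [integral_sub he_int hh_int, hie, hc0, (main he_int).1, sub_self]
      have hae : (fun s => e s - h s) = fun _ => (0:ℝ) := by
        rw [← Continuous.ae_eq_iff_eq volume (show Continuous (fun s => e s - h s) from he_cont.sub hh_cont) continuous_const]
        exact (integral_eq_zero_iff_of_nonneg
          (fun s => sub_nonneg.mpr ((le_abs_self _).trans (habs s)))
          (he_int.sub hh_int)).mp hzero
      intro s
      have heqs : e s = h s := sub_eq_zero.mp (congrFun hae s)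
      exact ode_pointwise hε (hF0 (qt s)) heqs
    · intro hode
      have heh : ∀ s, e s = h s := by
        intro s
        have h1 := hode s
        have h2 : (fOne F (qt s)) ^ 2 = 2 * F (qt s) := fOne_sq F (qt s) (hF0 _)
        have h3 : ε ^ 2 * (deriv qt s) ^ 2 = 2 * F (qt s) := by
          rw [← h2, ← h1]; ring
        have hFq : F (qt s) = ε ^ 2 * (deriv qt s) ^ 2 / 2 := by linarith
        show ε / 2 * (deriv qt s) ^ 2 + 1 / ε * F (qt s) = fOne F (qt s) * deriv qt s
        rw [← h1, hFq]
        field_simp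
        ring
      have hGe : ∀ s, HasDerivAt (fun x => G (qt x)) (e s) s :=
        fun s => (heh s) ▸ hGq s
      have he_int : Integrable e := by
        refine integrable_of_intervalIntegral_norm_tendsto (G 1 - G (-1))
          (a := fun i : ℝ => -i) (b := fun i : ℝ => i) (l := Filter.atTop)
          (fun i => he_cont.integrableOn_Ioc) Filter.tendsto_neg_atTop_atBot
          Filter.tendsto_id ?_
        have key : ∀ i : ℝ, (∫ x in (-i)..i, ‖e x‖) = G (qt i) - G (qt (-i)) := by
          intro i
          have h1 : (∫ x in (-i)..i, ‖e x‖) = ∫ x in (-i)..i, e x :=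
            intervalIntegral.integral_congr fun x _ => by
              rw [Real.norm_eq_abs, abs_of_nonneg (he_nonneg x)]
          rw [h1]
          exact intervalIntegral.integral_eq_sub_of_hasDerivAt
            (fun x _ => hGe x) (he_cont.intervalIntegrable _ _)
        refine Filter.Tendsto.congr (fun i => (key i).symm) ?_
        exact Filter.Tendsto.sub (hGtop.comp Filter.tendsto_id)
          (hGbot.comp Filter.tendsto_neg_atTop_atBot)
      rw [hlii, hintofin he_int]
      congr 1
      rw [hc0]
      exact integral_of_hasDerivAt_of_tendsto hGe he_int hGbot hGtop
end
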